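/- Let Fb = {B_g}_{g ∈ G(-,-)} be a Fell bundle over a discrete groupoid G and let Λ be its left regular representation on the right Hilbert C₀({B_x})-module L²(Fb), given by (Λ(b_f)ξ)(g) = b_f ξ(f⁻¹g) if t(g) = t(f) and 0 otherwise. Then Λ(b_f) is adjointable, ||Λ(b_f)|| = ||b_f||, and Λ(b_f)Λ(b_g) = Λ(b_f b_g) when s(f) = t(g), Λ(b_f)Λ(b_g) = 0 when s(f) ≠ t(g), and Λ(b_f)* = Λ(b_f*). -/

import Mathlib

/-! On the generators `j_g(c)` all four claims are finite computations in the groupoid, and they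
extend to `L²(Fb)` because the generators span a dense subspace and everything is continuous.

For the norm, `⟨Λ(b)u, Λ(b)u⟩ = ⟨u, Λ(b*b)u⟩`. For `u = Σ_g j_g(c_g)` both this and `⟨u, u⟩` are
sums `Σ_x e0_x(D_x)` of mutually orthogonal self-adjoint terms, one for each object `x`. Such a
sum has the norm of its largest term (compare `‖T‖ ^ 2 ^ k` with `‖T ^ 2 ^ k‖ ≤ n · max ‖t_x‖ ^ 2 ^ k`),
and for each object `D'_x ≤ ‖b‖² D_x` in the order of `E`. Equality is attained at
`u = j_{f⁻¹}(b*)`. -/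

open CategoryTheory ContinuousLinearMap
open scoped Classical

universe v u w u'

def Mor (V : Type v) [Groupoid V] := Σ (x : V) (y : V), x ⟶ y

namespace Mor

variable {V : Type v} [Groupoid V]

def src (f : Mor V) : V := f.1
def tgt (f : Mor V) : V := f.2.1
def hom (f : Mor V) : f.src ⟶ f.tgt := f.2.2

def comp (g f : Mor V) (h : f.tgt = g.src) : Mor V :=
  ⟨f.src, g.tgt, f.hom ≫ eqToHom h ≫ g.hom⟩

def inv (f : Mor V) : Mor V := ⟨f.tgt, f.src, Groupoid.inv f.hom⟩
def id (x : V) : Mor V := ⟨x, x, 𝟙 x⟩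

end Mor

/-- A (concretely represented) Fell bundle over a discrete groupoid. -/
structure FellBundle (V : Type v) [Groupoid V] (E : Type u)
    [NonUnitalCStarAlgebra E] where
  fib : Mor V → Submodule ℂ E
  isClosed : ∀ f, IsClosed (fib f : Set E)
  mul_mem : ∀ (f g : Mor V) (h : g.tgt = f.src) ⦃a b : E⦄,
    a ∈ fib f → b ∈ fib g → a * b ∈ fib (f.comp g h)
  mul_eq_zero : ∀ f g : Mor V, g.tgt ≠ f.src →
    ∀ ⦃a b : E⦄, a ∈ fib f → b ∈ fib g → a * b = 0
  star_mem : ∀ (f : Mor V) ⦃a : E⦄, a ∈ fib f → star a ∈ fib f.inv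

namespace Mor

variable {V : Type v} [Groupoid V]

lemma id_comp {x : V} (g : Mor V) (h : g.tgt = x) : (Mor.id x).comp g h = g := by
  obtain ⟨a, b, φ⟩ := g
  subst h
  simp only [comp, src, tgt, id, hom, Category.comp_id]
  erw [eqToHom_refl, Category.comp_id]

lemma comp_assoc (f g k : Mor V) (h₁ : k.tgt = g.src) (h₂ : g.tgt = f.src) :
    f.comp (g.comp k h₁) h₂ = (f.comp g h₂).comp k h₁ := by
  obtain ⟨a, b, φ⟩ := k
  obtain ⟨b', c, ψ⟩ := g
  obtain ⟨c', d, χ⟩ := f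
  dsimp only [tgt, src] at h₁ h₂
  subst h₁ h₂
  simp only [comp, src, tgt, hom, eqToHom_refl, Category.id_comp, Category.assoc]
  rfl

lemma inv_comp_self (f : Mor V) : f.inv.comp f rfl = Mor.id f.src := by
  obtain ⟨a, b, φ⟩ := f
  simp only [comp, src, inv, tgt, hom, Groupoid.inv_eq_inv, id]
  erw [eqToHom_refl, Category.id_comp, IsIso.hom_inv_id]

lemma comp_inv_self (f : Mor V) : f.comp f.inv rfl = Mor.id f.tgt := by
  obtain ⟨a, b, φ⟩ := f
  simp only [comp, inv, tgt, src, hom, Groupoid.inv_eq_inv, eqToHom_naturality_assoc, eqToHom_refl,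
    IsIso.inv_hom_id, Category.comp_id, id]
  rfl

lemma inv_comp_comp (f g : Mor V) (h : g.tgt = f.src) : f.inv.comp (f.comp g h) rfl = g := by
  obtain ⟨a, b, φ⟩ := g
  obtain ⟨b', c, ψ⟩ := f
  dsimp only [tgt, src] at h
  subst h
  simp only [comp, src, tgt, hom, eqToHom_refl, inv, Category.id_comp, Groupoid.inv_eq_inv,
    eqToHom_naturality_assoc, Category.assoc, IsIso.hom_inv_id, Category.comp_id]
  rfl

lemma comp_inv_comp (f k : Mor V) (h : k.tgt = f.inv.src) : f.comp (f.inv.comp k h) rfl = k := by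
  obtain ⟨a, b, φ⟩ := k
  obtain ⟨b', c, ψ⟩ := f
  dsimp only [inv, tgt, src] at h
  subst h
  simp only [comp, inv, tgt, src, hom, eqToHom_refl, Groupoid.inv_eq_inv, Category.id_comp,
    eqToHom_naturality_assoc, Category.assoc, IsIso.inv_hom_id, Category.comp_id]
  rfl

lemma comp_eq_iff_eq_inv_comp {f g k : Mor V} (h₁ : g.tgt = f.src) (h₂ : k.tgt = f.inv.src) :
    f.comp g h₁ = k ↔ g = f.inv.comp k h₂ := by
  constructor
  · rintro rfl
    exact (inv_comp_comp f g h₁).symm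
  · rintro rfl
    exact comp_inv_comp f k h₂

end Mor

open Finset

lemma le_of_forall_pow_two_pow_le_mul {a b C : ℝ} (hb : 0 ≤ b)
    (h : ∀ k : ℕ, a ^ 2 ^ k ≤ C * b ^ 2 ^ k) : a ≤ b := by
  by_contra! hba
  rcases hb.eq_or_lt with rfl | hb
  · have := h 0
    simp only [pow_zero, pow_one, mul_zero] at this
    linarith
  · have hr : 1 < a / b := (one_lt_div hb).mpr hba
    obtain ⟨k, hk⟩ := pow_unbounded_of_one_lt C hr
    have : (a / b) ^ 2 ^ k ≤ C := by
      rw [div_pow, div_le_iff₀ (by positivity)]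
      exact h k
    have := pow_le_pow_right₀ hr.le (Nat.lt_two_pow_self (n := k)).le
    linarith

section Orthogonal

variable {A : Type*} [NonUnitalCStarAlgebra A] {ι : Type*} {s : Finset ι} {t : ι → A}

lemma sum_mul_sum_self_of_pairwise (horth : (s : Set ι).Pairwise fun i j => t i * t j = 0) :
    (∑ i ∈ s, t i) * ∑ i ∈ s, t i = ∑ i ∈ s, t i * t i := by
  rw [sum_mul_sum]
  refine sum_congr rfl fun i hi => sum_eq_single i (fun j hj hji => horth hi hj hji.symm) ?_
  exact fun hi' => (hi' hi).elim

lemma norm_sum_pow_two_pow_le_of_pairwise (k : ℕ) {M : ℝ}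
    (hsa : ∀ i ∈ s, IsSelfAdjoint (t i)) (horth : (s : Set ι).Pairwise fun i j => t i * t j = 0)
    (hM : ∀ i ∈ s, ‖t i‖ ≤ M) : ‖∑ i ∈ s, t i‖ ^ 2 ^ k ≤ #s * M ^ 2 ^ k := by
  induction k generalizing t M with
  | zero =>
    simp only [pow_zero, pow_one]
    calc ‖∑ i ∈ s, t i‖ ≤ ∑ i ∈ s, ‖t i‖ := norm_sum_le _ _
      _ ≤ #s • M := sum_le_card_nsmul _ _ _ hM
      _ = #s * M := nsmul_eq_mul _ _
  | succ k ih =>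
    have hsq : ‖∑ i ∈ s, t i * t i‖ = ‖∑ i ∈ s, t i‖ ^ 2 := by
      rw [← sum_mul_sum_self_of_pairwise horth, (isSelfAdjoint_sum s hsa).norm_mul_self]
    have hsa₂ : ∀ i ∈ s, IsSelfAdjoint (t i * t i) := fun i hi => by
      simpa only [(hsa i hi).star_eq] using IsSelfAdjoint.star_mul_self (t i)
    have horth₂ : (s : Set ι).Pairwise fun i j => t i * t i * (t j * t j) = 0 :=
      fun i hi j hj hij => by
        dsimp only
        rw [mul_assoc, ← mul_assoc (t i) (t j), horth hi hj hij, zero_mul, mul_zero]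
    have hM₂ : ∀ i ∈ s, ‖t i * t i‖ ≤ M ^ 2 := fun i hi =>
      (norm_mul_le _ _).trans (sq (‖t i‖) ▸ pow_le_pow_left₀ (norm_nonneg _) (hM i hi) 2)
    have := ih hsa₂ horth₂ hM₂
    rwa [hsq, ← pow_mul, ← pow_mul, ← pow_succ'] at this

lemma norm_sum_le_of_pairwise {M : ℝ} (hM₀ : 0 ≤ M)
    (hsa : ∀ i ∈ s, IsSelfAdjoint (t i)) (horth : (s : Set ι).Pairwise fun i j => t i * t j = 0)
    (hM : ∀ i ∈ s, ‖t i‖ ≤ M) : ‖∑ i ∈ s, t i‖ ≤ M :=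
  le_of_forall_pow_two_pow_le_mul hM₀ fun k => norm_sum_pow_two_pow_le_of_pairwise k hsa horth hM

lemma norm_le_norm_sum_of_pairwise (hsa : ∀ i ∈ s, IsSelfAdjoint (t i))
    (horth : (s : Set ι).Pairwise fun i j => t i * t j = 0) {i : ι} (hi : i ∈ s) :
    ‖t i‖ ≤ ‖∑ j ∈ s, t j‖ := by
  have hmul : t i * ∑ j ∈ s, t j = t i * t i := by
    rw [mul_sum]
    exact sum_eq_single i (fun j hj hji => horth hi hj hji.symm) fun hi' => (hi' hi).elim
  have : ‖t i‖ * ‖t i‖ ≤ ‖t i‖ * ‖∑ j ∈ s, t j‖ := by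
    calc ‖t i‖ * ‖t i‖ = ‖t i * ∑ j ∈ s, t j‖ := by rw [hmul, (hsa i hi).norm_mul_self, sq]
      _ ≤ ‖t i‖ * ‖∑ j ∈ s, t j‖ := norm_mul_le _ _
  rcases (norm_nonneg (t i)).eq_or_lt with h0 | hpos
  · exact h0 ▸ norm_nonneg _
  · exact le_of_mul_le_mul_left this hpos

lemma norm_sum_le_mul_norm_sum_of_pairwise {t' : ι → A} {K : ℝ} (hK : 0 ≤ K)
    (hsa : ∀ i ∈ s, IsSelfAdjoint (t i)) (horth : (s : Set ι).Pairwise fun i j => t i * t j = 0)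
    (hsa' : ∀ i ∈ s, IsSelfAdjoint (t' i))
    (horth' : (s : Set ι).Pairwise fun i j => t' i * t' j = 0)
    (hle : ∀ i ∈ s, ‖t' i‖ ≤ K * ‖t i‖) : ‖∑ i ∈ s, t' i‖ ≤ K * ‖∑ i ∈ s, t i‖ :=
  norm_sum_le_of_pairwise (by positivity) hsa' horth' fun i hi =>
    (hle i hi).trans (mul_le_mul_of_nonneg_left (norm_le_norm_sum_of_pairwise hsa horth hi) hK)

end Orthogonal

lemma norm_sum_star_mul_self_le {A : Type*} [NonUnitalCStarAlgebra A] {ι : Type*} (s : Finset ι)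
    (b : A) {c c' : ι → A} (hc' : ∀ i, c' i = b * c i ∨ c' i = 0) :
    ‖∑ i ∈ s, star (c' i) * c' i‖ ≤ ‖b‖ ^ 2 * ‖∑ i ∈ s, star (c i) * c i‖ := by
  let _ := CStarAlgebra.spectralOrder A
  have _ := CStarAlgebra.spectralOrderedRing A
  have hterm : ∀ i, star (c' i) * c' i ≤ ‖b‖ ^ 2 • (star (c i) * c i) := fun i => by
    rcases hc' i with h | h
    · calc star (c' i) * c' i = star (c i) * (star b * b) * c i := by
            rw [h, star_mul, mul_assoc, mul_assoc, mul_assoc]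
        _ ≤ ‖star b * b‖ • (star (c i) * c i) := CStarAlgebra.star_left_conjugate_le_norm_smul
        _ = ‖b‖ ^ 2 • (star (c i) * c i) := by rw [CStarRing.norm_star_mul_self, sq]
    · rw [h, star_zero, zero_mul]
      exact smul_nonneg (by positivity) (star_mul_self_nonneg _)
  calc ‖∑ i ∈ s, star (c' i) * c' i‖ ≤ ‖‖b‖ ^ 2 • ∑ i ∈ s, star (c i) * c i‖ := by
        refine CStarAlgebra.norm_le_norm_of_nonneg_of_le
          (sum_nonneg fun i _ => star_mul_self_nonneg _) ?_
        rw [smul_sum]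
        exact sum_le_sum fun i _ => hterm i
    _ = ‖b‖ ^ 2 * ‖∑ i ∈ s, star (c i) * c i‖ := by
        rw [norm_smul, Real.norm_of_nonneg (by positivity)]

namespace FellBundle

variable {V : Type v} [Groupoid V] {E : Type u} [NonUnitalCStarAlgebra E] (Fb : FellBundle V E)

lemma star_mul_self_mem {g : Mor V} {c : E} (hc : c ∈ Fb.fib g) :
    star c * c ∈ Fb.fib (Mor.id g.src) :=
  Mor.inv_comp_self g ▸ Fb.mul_mem g.inv g rfl (Fb.star_mem g hc) hc

lemma mul_star_self_mem {f : Mor V} {b : E} (hb : b ∈ Fb.fib f) :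
    b * star b ∈ Fb.fib (Mor.id f.tgt) :=
  Mor.comp_inv_self f ▸ Fb.mul_mem f f.inv rfl hb (Fb.star_mem f hb)

lemma mul_mem_of_mem_id {x : V} {g : Mor V} (h : g.tgt = x) {p c : E}
    (hp : p ∈ Fb.fib (Mor.id x)) (hc : c ∈ Fb.fib g) : p * c ∈ Fb.fib g :=
  Mor.id_comp g h ▸ Fb.mul_mem (Mor.id x) g h hp hc

/-- A model of `L²(Fb)` as a Banach space `Y` with a `C₀({B_x})`-valued inner product:
`A0` plays the role of `C₀({B_x})`, `e0 x` embeds the unit fibre `B_{id x}` into it, and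
`j f : B_f → Y` are the canonical inclusions. -/
structure L2Module (A0 : Type*) [NonUnitalCStarAlgebra A0]
    (Y : Type*) [NormedAddCommGroup Y] [NormedSpace ℂ Y] where
  e0 : V → E →ₗ[ℂ] A0
  star_e0 : ∀ (x : V) (a : E), a ∈ Fb.fib (Mor.id x) → star (e0 x a) = e0 x (star a)
  norm_e0 : ∀ (x : V) (a : E), a ∈ Fb.fib (Mor.id x) → ‖e0 x a‖ = ‖a‖
  e0_mul_e0 : ∀ x y : V, x ≠ y → ∀ a b : E, a ∈ Fb.fib (Mor.id x) →
    b ∈ Fb.fib (Mor.id y) → e0 x a * e0 y b = 0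
  inner : Y → Y → A0
  inner_add_right : ∀ u v₁ v₂, inner u (v₁ + v₂) = inner u v₁ + inner u v₂
  inner_smul_right : ∀ (c : ℂ) u v, inner u (c • v) = c • inner u v
  star_inner : ∀ u v, star (inner u v) = inner v u
  norm_sq_eq : ∀ u, ‖u‖ ^ 2 = ‖inner u u‖
  continuous_inner : Continuous fun p : Y × Y => inner p.1 p.2
  j : Mor V → E →ₗ[ℂ] Y
  inner_j_j : ∀ (f g : Mor V) (a b : E), a ∈ Fb.fib f → b ∈ Fb.fib g →
    inner (j f a) (j g b) = if f = g then e0 f.src (star a * b) else 0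
  dense_span_j : Dense (↑(Submodule.span ℂ (⋃ f : Mor V, j f '' (Fb.fib f : Set E))) : Set Y)

namespace L2Module

variable {Fb} {A0 : Type*} [NonUnitalCStarAlgebra A0] {Y : Type*} [NormedAddCommGroup Y]
  [NormedSpace ℂ Y] (M : Fb.L2Module A0 Y)

def innerCLM (u : Y) : Y →L[ℂ] A0 where
  toFun := M.inner u
  map_add' := M.inner_add_right u
  map_smul' c v := M.inner_smul_right c u v
  cont := M.continuous_inner.comp (continuous_const.prodMk continuous_id)

@[simp] lemma innerCLM_apply (u v : Y) : M.innerCLM u v = M.inner u v := rfl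

lemma inner_zero_right (u : Y) : M.inner u 0 = 0 := (M.innerCLM u).map_zero

lemma inner_zero_left (v : Y) : M.inner 0 v = 0 := by
  rw [← M.star_inner, inner_zero_right, star_zero]

lemma inner_sum_right {ι : Type*} (s : Finset ι) (u : Y) (v : ι → Y) :
    M.inner u (∑ i ∈ s, v i) = ∑ i ∈ s, M.inner u (v i) :=
  map_sum (M.innerCLM u) v s

lemma inner_sum_left {ι : Type*} (s : Finset ι) (u : ι → Y) (v : Y) :
    M.inner (∑ i ∈ s, u i) v = ∑ i ∈ s, M.inner (u i) v := by
  rw [← M.star_inner, inner_sum_right, star_sum]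
  simp only [M.star_inner]

lemma inner_sum_j_sum_j (s : Finset (Mor V)) {a a' : Mor V → E} (ha : ∀ g, a g ∈ Fb.fib g)
    (ha' : ∀ g, a' g ∈ Fb.fib g) :
    M.inner (∑ g ∈ s, M.j g (a g)) (∑ g ∈ s, M.j g (a' g)) =
      ∑ g ∈ s, M.e0 g.src (star (a g) * a' g) := by
  rw [inner_sum_left]
  refine sum_congr rfl fun g hg => ?_
  rw [inner_sum_right, sum_eq_single g (fun k _ hkg => ?_) fun hg' => (hg' hg).elim,
    M.inner_j_j g g _ _ (ha g) (ha' g), if_pos rfl]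
  rw [M.inner_j_j g k _ _ (ha g) (ha' k), if_neg hkg.symm]

lemma norm_j {g : Mor V} {c : E} (hc : c ∈ Fb.fib g) : ‖M.j g c‖ = ‖c‖ := by
  have h : ‖M.j g c‖ ^ 2 = ‖c‖ ^ 2 := by
    rw [M.norm_sq_eq, M.inner_j_j g g c c hc hc, if_pos rfl,
      M.norm_e0 _ _ (Fb.star_mul_self_mem hc), CStarRing.norm_star_mul_self, sq]
  exact (sq_eq_sq₀ (norm_nonneg _) (norm_nonneg _)).mp h

lemma ext_j {F : Type*} [TopologicalSpace F] [AddCommMonoid F] [Module ℂ F] [T2Space F]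
    {T₁ T₂ : Y →L[ℂ] F} (h : ∀ (g : Mor V) (c : E), c ∈ Fb.fib g → T₁ (M.j g c) = T₂ (M.j g c)) :
    T₁ = T₂ := by
  refine ContinuousLinearMap.ext_on M.dense_span_j ?_
  rintro _ ⟨_, ⟨g, rfl⟩, c, hc, rfl⟩
  exact h g c hc

lemma exists_eq_sum_j_of_mem_span {u : Y}
    (hu : u ∈ Submodule.span ℂ (⋃ f : Mor V, M.j f '' (Fb.fib f : Set E))) :
    ∃ (s : Finset (Mor V)) (c : Mor V → E), (∀ g, c g ∈ Fb.fib g) ∧ u = ∑ g ∈ s, M.j g (c g) := by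
  rw [Submodule.span_iUnion, Submodule.mem_iSup_iff_exists_finsupp] at hu
  obtain ⟨F, hF, rfl⟩ := hu
  have hF' : ∀ g, ∃ c ∈ Fb.fib g, M.j g c = F g := fun g => by
    simpa only [Submodule.span_image, Submodule.span_eq, Submodule.mem_map] using hF g
  choose c hc hcF using hF'
  exact ⟨F.support, c, hc, by simp only [Finsupp.sum, hcF]⟩

lemma sum_e0_eq_sum_image (s : Finset (Mor V)) (d : Mor V → E) :
    ∑ g ∈ s, M.e0 g.src (d g) = ∑ x ∈ s.image Mor.src, M.e0 x (∑ g ∈ s with g.src = x, d g) := by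
  refine (sum_image' _ fun g _ => ?_).symm
  rw [map_sum]
  exact sum_congr rfl fun k hk => by rw [(mem_filter.mp hk).2]

lemma norm_sum_e0_le_mul (s : Finset (Mor V)) {d d' : Mor V → E}
    (hd : ∀ g, d g ∈ Fb.fib (Mor.id g.src)) (hd' : ∀ g, d' g ∈ Fb.fib (Mor.id g.src))
    (hsa : ∀ g, IsSelfAdjoint (d g)) (hsa' : ∀ g, IsSelfAdjoint (d' g)) {K : ℝ} (hK : 0 ≤ K)
    (hle : ∀ x, ‖∑ g ∈ s with g.src = x, d' g‖ ≤ K * ‖∑ g ∈ s with g.src = x, d g‖) :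
    ‖∑ g ∈ s, M.e0 g.src (d' g)‖ ≤ K * ‖∑ g ∈ s, M.e0 g.src (d g)‖ := by
  have hmem : ∀ {d : Mor V → E}, (∀ g, d g ∈ Fb.fib (Mor.id g.src)) →
      ∀ x, ∑ g ∈ s with g.src = x, d g ∈ Fb.fib (Mor.id x) := fun hd x =>
    Submodule.sum_mem _ fun g hg => (mem_filter.mp hg).2 ▸ hd g
  have hsa_e0 : ∀ {d : Mor V → E}, (∀ g, d g ∈ Fb.fib (Mor.id g.src)) →
      (∀ g, IsSelfAdjoint (d g)) →
      ∀ x ∈ s.image Mor.src, IsSelfAdjoint (M.e0 x (∑ g ∈ s with g.src = x, d g)) :=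
    fun hd hsa x _ => by
      rw [IsSelfAdjoint, M.star_e0 x _ (hmem hd x), (isSelfAdjoint_sum _ fun g _ => hsa g).star_eq]
  have horth : ∀ {d : Mor V → E}, (∀ g, d g ∈ Fb.fib (Mor.id g.src)) →
      ((s.image Mor.src : Set V).Pairwise fun x y =>
        M.e0 x (∑ g ∈ s with g.src = x, d g) * M.e0 y (∑ g ∈ s with g.src = y, d g) = 0) :=
    fun hd x _ y _ hxy => M.e0_mul_e0 x y hxy _ _ (hmem hd x) (hmem hd y)
  rw [sum_e0_eq_sum_image, sum_e0_eq_sum_image]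
  refine norm_sum_le_mul_norm_sum_of_pairwise hK (hsa_e0 hd hsa) (horth hd) (hsa_e0 hd' hsa')
    (horth hd') fun x _ => ?_
  rw [M.norm_e0 x _ (hmem hd x), M.norm_e0 x _ (hmem hd' x)]
  exact hle x

def IsLeftRegular (Λ : Mor V → E → (Y →L[ℂ] Y)) : Prop :=
  ∀ (f : Mor V) (b : E), b ∈ Fb.fib f → ∀ (g : Mor V) (c : E), c ∈ Fb.fib g →
    Λ f b (M.j g c) = if h : g.tgt = f.src then M.j (f.comp g h) (b * c) else 0

namespace IsLeftRegular

variable {M} {Λ : Mor V → E → (Y →L[ℂ] Y)}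

lemma comp_eq (hΛ : M.IsLeftRegular Λ) {f g : Mor V} (h : g.tgt = f.src) {b c : E}
    (hb : b ∈ Fb.fib f) (hc : c ∈ Fb.fib g) : Λ f b ∘L Λ g c = Λ (f.comp g h) (b * c) := by
  refine M.ext_j fun k d hd => ?_
  rw [ContinuousLinearMap.comp_apply, hΛ g c hc k d hd, hΛ _ _ (Fb.mul_mem f g h hb hc) k d hd]
  by_cases hk : k.tgt = g.src
  · rw [dif_pos hk, dif_pos (show k.tgt = (f.comp g h).src from hk),
      hΛ f b hb _ _ (Fb.mul_mem g k hk hc hd),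
      dif_pos (show (g.comp k hk).tgt = f.src from h),
      Mor.comp_assoc, mul_assoc]
  · rw [dif_neg hk, dif_neg (show ¬k.tgt = (f.comp g h).src from hk), map_zero]

lemma comp_eq_zero (hΛ : M.IsLeftRegular Λ) {f g : Mor V} (h : g.tgt ≠ f.src) {b c : E}
    (hb : b ∈ Fb.fib f) (hc : c ∈ Fb.fib g) : Λ f b ∘L Λ g c = 0 := by
  refine M.ext_j fun k d hd => ?_
  rw [ContinuousLinearMap.comp_apply, hΛ g c hc k d hd, zero_apply]
  by_cases hk : k.tgt = g.src
  · rw [dif_pos hk, hΛ f b hb _ _ (Fb.mul_mem g k hk hc hd),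
      dif_neg (show ¬(g.comp k hk).tgt = f.src from h)]
  · rw [dif_neg hk, map_zero]

lemma id_apply_j (hΛ : M.IsLeftRegular Λ) {x : V} {p : E} (hp : p ∈ Fb.fib (Mor.id x))
    {g : Mor V} {c : E} (hc : c ∈ Fb.fib g) :
    Λ (Mor.id x) p (M.j g c) = M.j g (if g.tgt = x then p * c else 0) := by
  rw [hΛ _ _ hp g c hc]
  by_cases h : g.tgt = x
  · rw [dif_pos (show g.tgt = (Mor.id x).src from h), if_pos h, Mor.id_comp]
  · rw [dif_neg (show ¬g.tgt = (Mor.id x).src from h), if_neg h, map_zero]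

lemma inner_apply_left_j (hΛ : M.IsLeftRegular Λ) {f g k : Mor V} {b c d : E}
    (hb : b ∈ Fb.fib f) (hc : c ∈ Fb.fib g) (hd : d ∈ Fb.fib k) :
    M.inner (Λ f b (M.j g c)) (M.j k d) = M.inner (M.j g c) (Λ f.inv (star b) (M.j k d)) := by
  have hb' := Fb.star_mem f hb
  rw [hΛ f b hb g c hc, hΛ f.inv (star b) hb' k d hd]
  by_cases h₁ : g.tgt = f.src <;> by_cases h₂ : k.tgt = f.inv.src
  · rw [dif_pos h₁, dif_pos h₂, M.inner_j_j _ _ _ _ (Fb.mul_mem f g h₁ hb hc) hd,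
      M.inner_j_j _ _ _ _ hc (Fb.mul_mem f.inv k h₂ hb' hd), star_mul, mul_assoc]
    exact if_congr (Mor.comp_eq_iff_eq_inv_comp h₁ h₂) rfl rfl
  · rw [dif_pos h₁, dif_neg h₂, M.inner_zero_right,
      M.inner_j_j _ _ _ _ (Fb.mul_mem f g h₁ hb hc) hd, if_neg]
    rintro rfl
    exact h₂ rfl
  · rw [dif_neg h₁, dif_pos h₂, M.inner_zero_left,
      M.inner_j_j _ _ _ _ hc (Fb.mul_mem f.inv k h₂ hb' hd), if_neg]
    rintro rfl
    exact h₁ rfl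
  · rw [dif_neg h₁, dif_neg h₂, M.inner_zero_left, M.inner_zero_right]

lemma inner_apply_left (hΛ : M.IsLeftRegular Λ) {f : Mor V} {b : E} (hb : b ∈ Fb.fib f)
    (u v : Y) : M.inner (Λ f b u) v = M.inner u (Λ f.inv (star b) v) := by
  have hj : ∀ (g : Mor V) (c : E), c ∈ Fb.fib g → ∀ v,
      M.inner (Λ f b (M.j g c)) v = M.inner (M.j g c) (Λ f.inv (star b) v) := fun g c hc v => by
    have : M.innerCLM (Λ f b (M.j g c)) = (M.innerCLM (M.j g c)).comp (Λ f.inv (star b)) :=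
      M.ext_j fun k d hd => hΛ.inner_apply_left_j hb hc hd
    exact DFunLike.congr_fun this v
  have : (M.innerCLM v).comp (Λ f b) = M.innerCLM (Λ f.inv (star b) v) :=
    M.ext_j fun g c hc => by
      rw [ContinuousLinearMap.comp_apply, innerCLM_apply, innerCLM_apply, ← M.star_inner,
        hj g c hc, M.star_inner]
  calc M.inner (Λ f b u) v = star (M.inner v (Λ f b u)) := (M.star_inner _ _).symm
    _ = star (M.inner (Λ f.inv (star b) v) u) := congrArg star (DFunLike.congr_fun this u)
    _ = M.inner u (Λ f.inv (star b) v) := M.star_inner _ _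

lemma norm_apply_sum_j_le (hΛ : M.IsLeftRegular Λ) {f : Mor V} {b : E} (hb : b ∈ Fb.fib f)
    (s : Finset (Mor V)) {c : Mor V → E} (hc : ∀ g, c g ∈ Fb.fib g) :
    ‖Λ f b (∑ g ∈ s, M.j g (c g))‖ ≤ ‖b‖ * ‖∑ g ∈ s, M.j g (c g)‖ := by
  set u := ∑ g ∈ s, M.j g (c g)
  let c' : Mor V → E := fun g => if g.tgt = f.src then b * c g else 0
  have hp : star b * b ∈ Fb.fib (Mor.id f.src) := Fb.star_mul_self_mem hb
  have hpc : ∀ g, (if g.tgt = f.src then star b * b * c g else 0) ∈ Fb.fib g := fun g => by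
    split_ifs with h
    · exact Fb.mul_mem_of_mem_id h hp (hc g)
    · exact zero_mem _
  have hΛΛ : Λ f.inv (star b) (Λ f b u) =
      ∑ g ∈ s, M.j g (if g.tgt = f.src then star b * b * c g else 0) := by
    rw [← ContinuousLinearMap.comp_apply, hΛ.comp_eq rfl (Fb.star_mem f hb) hb,
      Mor.inv_comp_self, map_sum]
    exact sum_congr rfl fun g _ => hΛ.id_apply_j hp (hc g)
  have hinner : M.inner (Λ f b u) (Λ f b u) = ∑ g ∈ s, M.e0 g.src (star (c' g) * c' g) := by
    rw [hΛ.inner_apply_left hb, hΛΛ, M.inner_sum_j_sum_j s hc hpc]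
    refine sum_congr rfl fun g _ => ?_
    by_cases h : g.tgt = f.src <;> simp only [c', h, if_true, if_false, star_mul, mul_assoc,
      star_zero, mul_zero]
  have hc'mem : ∀ g, star (c' g) * c' g ∈ Fb.fib (Mor.id g.src) := fun g => by
    by_cases h : g.tgt = f.src
    · simp only [c', h, if_true]
      exact Fb.star_mul_self_mem (g := f.comp g h) (Fb.mul_mem f g h hb (hc g))
    · simpa only [c', h, if_false, star_zero, zero_mul] using zero_mem _
  have hsq : ‖Λ f b u‖ ^ 2 ≤ (‖b‖ * ‖u‖) ^ 2 := by
    rw [M.norm_sq_eq, mul_pow, M.norm_sq_eq, hinner, M.inner_sum_j_sum_j s hc hc]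
    refine M.norm_sum_e0_le_mul s (fun g => Fb.star_mul_self_mem (hc g)) hc'mem
      (fun _ => .star_mul_self _) (fun _ => .star_mul_self _) (by positivity) fun x =>
      norm_sum_star_mul_self_le _ b fun g => ?_
    by_cases h : g.tgt = f.src <;> simp only [c', h, if_true, if_false, true_or, or_true]
  exact le_of_pow_le_pow_left₀ two_ne_zero (by positivity) hsq

lemma norm_le (hΛ : M.IsLeftRegular Λ) {f : Mor V} {b : E} (hb : b ∈ Fb.fib f) :
    ‖Λ f b‖ ≤ ‖b‖ := by
  refine opNorm_le_bound _ (norm_nonneg b) fun u =>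
    M.dense_span_j.induction (fun u hu => ?_) (isClosed_le (by fun_prop) (by fun_prop)) u
  obtain ⟨s, c, hc, rfl⟩ := M.exists_eq_sum_j_of_mem_span hu
  exact hΛ.norm_apply_sum_j_le hb s hc

lemma le_norm (hΛ : M.IsLeftRegular Λ) {f : Mor V} {b : E} (hb : b ∈ Fb.fib f) :
    ‖b‖ ≤ ‖Λ f b‖ := by
  rcases eq_or_ne b 0 with rfl | hb0
  · simp only [norm_zero, norm_nonneg]
  have happly : Λ f b (M.j f.inv (star b)) = M.j (Mor.id f.tgt) (b * star b) := by
    rw [hΛ f b hb _ _ (Fb.star_mem f hb), dif_pos (show f.inv.tgt = f.src from rfl),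
      Mor.comp_inv_self]
  have h : ‖b‖ * ‖b‖ ≤ ‖Λ f b‖ * ‖b‖ :=
    calc ‖b‖ * ‖b‖ = ‖b * star b‖ := CStarRing.norm_self_mul_star.symm
      _ = ‖Λ f b (M.j f.inv (star b))‖ := by rw [happly, M.norm_j (Fb.mul_star_self_mem hb)]
      _ ≤ ‖Λ f b‖ * ‖M.j f.inv (star b)‖ := le_opNorm _ _
      _ = ‖Λ f b‖ * ‖b‖ := by rw [M.norm_j (Fb.star_mem f hb), norm_star]
  exact le_of_mul_le_mul_right h (norm_pos_iff.mpr hb0)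

lemma norm_eq (hΛ : M.IsLeftRegular Λ) {f : Mor V} {b : E} (hb : b ∈ Fb.fib f) :
    ‖Λ f b‖ = ‖b‖ :=
  (hΛ.norm_le hb).antisymm (hΛ.le_norm hb)

end IsLeftRegular

end L2Module

end FellBundle

theorem statement12_general {V : Type v} [Groupoid V] {E : Type u}
    [NonUnitalCStarAlgebra E] (Fb : FellBundle V E)
    {A0 : Type u'} [NonUnitalCStarAlgebra A0]
    (e0 : V → E →ₗ[ℂ] A0)
    (he0star : ∀ (x : V) (a : E), a ∈ Fb.fib (Mor.id x) →
      star (e0 x a) = e0 x (star a))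
    (he0isom : ∀ (x : V) (a : E), a ∈ Fb.fib (Mor.id x) → ‖e0 x a‖ = ‖a‖)
    (he0orth : ∀ x y : V, x ≠ y → ∀ a b : E, a ∈ Fb.fib (Mor.id x) →
      b ∈ Fb.fib (Mor.id y) → e0 x a * e0 y b = 0)
    -- the Hilbert module `L²(Fb)`
    {Y : Type w} [NormedAddCommGroup Y] [NormedSpace ℂ Y]
    (innY : Y → Y → A0)
    (hYadd : ∀ u v₁ v₂, innY u (v₁ + v₂) = innY u v₁ + innY u v₂)
    (hYsmul : ∀ (c : ℂ) u v, innY u (c • v) = c • innY u v)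
    (hYstar : ∀ u v, star (innY u v) = innY v u)
    (hYnorm : ∀ u, ‖u‖ ^ 2 = ‖innY u u‖)
    (hYcont : Continuous fun p : Y × Y => innY p.1 p.2)
    -- the canonical inclusions of the fibers
    (j : Mor V → E →ₗ[ℂ] Y)
    (hjinner : ∀ (f g : Mor V) (a b : E), a ∈ Fb.fib f → b ∈ Fb.fib g →
      innY (j f a) (j g b) = if f = g then e0 f.src (star a * b) else 0)
    (hjdense : Dense
      (↑(Submodule.span ℂ (⋃ f : Mor V, j f '' (Fb.fib f : Set E))) : Set Y))
    -- the left regular representation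
    (Λ : Mor V → E → (Y →L[ℂ] Y))
    (hΛ : ∀ (f : Mor V) (b : E), b ∈ Fb.fib f → ∀ (g : Mor V) (c : E),
      c ∈ Fb.fib g →
      Λ f b (j g c) = if h : g.tgt = f.src then j (f.comp g h) (b * c) else 0) :
    (∀ (f : Mor V) (b : E), b ∈ Fb.fib f →
      ∀ u v : Y, innY (Λ f b u) v = innY u (Λ f.inv (star b) v)) ∧
    (∀ (f : Mor V) (b : E), b ∈ Fb.fib f → ‖Λ f b‖ = ‖b‖) ∧
    (∀ (f g : Mor V) (h : g.tgt = f.src) (b c : E), b ∈ Fb.fib f → c ∈ Fb.fib g →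
      Λ f b ∘L Λ g c = Λ (f.comp g h) (b * c)) ∧
    (∀ f g : Mor V, g.tgt ≠ f.src → ∀ b c : E, b ∈ Fb.fib f → c ∈ Fb.fib g →
      Λ f b ∘L Λ g c = 0) := by
  let M : Fb.L2Module A0 Y := ⟨e0, he0star, he0isom, he0orth, innY, hYadd, hYsmul, hYstar,
    hYnorm, hYcont, j, hjinner, hjdense⟩
  have hM : M.IsLeftRegular Λ := hΛ
  exact ⟨fun _ _ hb => hM.inner_apply_left hb, fun _ _ hb => hM.norm_eq hb,
    fun _ _ h _ _ hb hc => hM.comp_eq h hb hc, fun _ _ h _ _ hb hc => hM.comp_eq_zero h hb hc⟩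

/-- the left regular representation `Λ` of a Fell bundle
`Fb = {B_g}` over a discrete groupoid `G` on the right Hilbert
`C₀({B_x})`-module `L²(Fb)` (with `A0 = C₀({B_x})`, `e0` the embeddings of the
unit fibers into `A0`, `j_f : B_f → L²(Fb)` the canonical inclusions with dense
span, `innY` the `A0`-valued inner product, and
`Λ(b_f) j_g(c) = j_{fg}(b_f c)` if `s(f) = t(g)` and `0` otherwise) satisfies:
`Λ(b_f)` is adjointable with `Λ(b_f)* = Λ(b_f*)`, `‖Λ(b_f)‖ = ‖b_f‖`,
`Λ(b_f)Λ(b_g) = Λ(b_f b_g)` when `s(f) = t(g)`, and `Λ(b_f)Λ(b_g) = 0` when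
`s(f) ≠ t(g)`. -/
theorem statement12 {V : Type v} [Groupoid V] {E : Type u}
    [NonUnitalCStarAlgebra E] (Fb : FellBundle V E)
    {A0 : Type u'} [NonUnitalCStarAlgebra A0]
    (e0 : V → E →ₗ[ℂ] A0)
    (he0mul : ∀ (x : V) (a b : E), a ∈ Fb.fib (Mor.id x) → b ∈ Fb.fib (Mor.id x) →
      e0 x (a * b) = e0 x a * e0 x b)
    (he0star : ∀ (x : V) (a : E), a ∈ Fb.fib (Mor.id x) →
      star (e0 x a) = e0 x (star a))
    (he0isom : ∀ (x : V) (a : E), a ∈ Fb.fib (Mor.id x) → ‖e0 x a‖ = ‖a‖)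
    (he0orth : ∀ x y : V, x ≠ y → ∀ a b : E, a ∈ Fb.fib (Mor.id x) →
      b ∈ Fb.fib (Mor.id y) → e0 x a * e0 y b = 0)
    -- the Hilbert module `L²(Fb)`
    {Y : Type w} [NormedAddCommGroup Y] [NormedSpace ℂ Y] [CompleteSpace Y]
    (innY : Y → Y → A0)
    (hYadd : ∀ u v₁ v₂, innY u (v₁ + v₂) = innY u v₁ + innY u v₂)
    (hYsmul : ∀ (c : ℂ) u v, innY u (c • v) = c • innY u v)
    (hYstar : ∀ u v, star (innY u v) = innY v u)
    (hYnorm : ∀ u, ‖u‖ ^ 2 = ‖innY u u‖)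
    (hYdef : ∀ u, innY u u = 0 → u = 0)
    (hYcont : Continuous fun p : Y × Y => innY p.1 p.2)
    -- the canonical inclusions of the fibers
    (j : Mor V → E →ₗ[ℂ] Y)
    (hjinner : ∀ (f g : Mor V) (a b : E), a ∈ Fb.fib f → b ∈ Fb.fib g →
      innY (j f a) (j g b) = if f = g then e0 f.src (star a * b) else 0)
    (hjdense : Dense
      (↑(Submodule.span ℂ (⋃ f : Mor V, j f '' (Fb.fib f : Set E))) : Set Y))
    -- the left regular representation
    (Λ : Mor V → E → (Y →L[ℂ] Y))
    (hΛ : ∀ (f : Mor V) (b : E), b ∈ Fb.fib f → ∀ (g : Mor V) (c : E),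
      c ∈ Fb.fib g →
      Λ f b (j g c) = if h : g.tgt = f.src then j (f.comp g h) (b * c) else 0) :
    (∀ (f : Mor V) (b : E), b ∈ Fb.fib f →
      ∀ u v : Y, innY (Λ f b u) v = innY u (Λ f.inv (star b) v)) ∧
    (∀ (f : Mor V) (b : E), b ∈ Fb.fib f → ‖Λ f b‖ = ‖b‖) ∧
    (∀ (f g : Mor V) (h : g.tgt = f.src) (b c : E), b ∈ Fb.fib f → c ∈ Fb.fib g →
      Λ f b ∘L Λ g c = Λ (f.comp g h) (b * c)) ∧
    (∀ f g : Mor V, g.tgt ≠ f.src → ∀ b c : E, b ∈ Fb.fib f → c ∈ Fb.fib g →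
      Λ f b ∘L Λ g c = 0) :=
  statement12_general Fb e0 he0star he0isom he0orth innY hYadd hYsmul hYstar hYnorm hYcont j hjinner
    hjdense Λ hΛ
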